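/- Let φ = p̃/p be a bidegree (m,n) rational inner function on 𝔻², let α ∈ 𝕋, and suppose the vertical line {ζ ∈ 𝕋² : ζ₁ = τ} is contained in C_α(φ), so that d := ∂φ/∂z₁(τ, z₂) is a nonzero constant independent of z₂ ∈ 𝔻. Then for every fixed z₂ ∈ 𝔻, lim_{r→1⁻} (1−r)·(1−|φ(rτ, z₂)|²)/|α − φ(rτ, z₂)|² = 2/|d|. -/

import Mathlib

open MeasureTheory Complex Filter Topology

noncomputable section

/-- The open unit bidisk `𝔻²` in `ℂ²`. -/
def bidisk : Set (ℂ × ℂ) := {z | ‖z.1‖ < 1 ∧ ‖z.2‖ < 1}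

/-- The closed bidisk. -/
def closedBidisk : Set (ℂ × ℂ) := {z | ‖z.1‖ ≤ 1 ∧ ‖z.2‖ ≤ 1}

/-- The distinguished boundary `𝕋²` of the bidisk. -/
def torus2 : Set (ℂ × ℂ) := {z | ‖z.1‖ = 1 ∧ ‖z.2‖ = 1}

/-- Evaluation of a two-variable polynomial at a point of `ℂ²`. -/
def ev (p : MvPolynomial (Fin 2) ℂ) (z : ℂ × ℂ) : ℂ :=
  MvPolynomial.eval ![z.1, z.2] p

/-- The rational function `φ = p̃/p`. -/
def rif (p pt : MvPolynomial (Fin 2) ℂ) (z : ℂ × ℂ) : ℂ := ev pt z / ev p z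

/-- The partial derivative `∂φ/∂z₁` of `φ = p̃/p`, via the quotient rule. -/
def dphi1 (p pt : MvPolynomial (Fin 2) ℂ) (z : ℂ × ℂ) : ℂ :=
  (ev (MvPolynomial.pderiv 0 pt) z * ev p z - ev pt z * ev (MvPolynomial.pderiv 0 p) z) /
    (ev p z) ^ 2

/-- The partial derivative `∂φ/∂z₂` of `φ = p̃/p`, via the quotient rule. -/
def dphi2 (p pt : MvPolynomial (Fin 2) ℂ) (z : ℂ × ℂ) : ℂ :=
  (ev (MvPolynomial.pderiv 1 pt) z * ev p z - ev pt z * ev (MvPolynomial.pderiv 1 p) z) /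
    (ev p z) ^ 2

/-- `pt` is the reflection `p̃(z₁,z₂) = z₁^m z₂^n conj(p(1/conj z₁, 1/conj z₂))` of `p`
at bidegree `(m,n)`. -/
def IsReflection2 (m n : ℕ) (p pt : MvPolynomial (Fin 2) ℂ) : Prop :=
  ∀ z : ℂ × ℂ, z.1 ≠ 0 → z.2 ≠ 0 →
    ev pt z = z.1 ^ m * z.2 ^ n *
      (starRingEnd ℂ) (ev p (((starRingEnd ℂ) z.1)⁻¹, ((starRingEnd ℂ) z.2)⁻¹))

/-- The data of a bidegree `(m,n)` rational inner function `φ = p̃/p` on the bidisk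
(with `m, n ≥ 1`):  `p` has degree `m` in `z₁` and `n` in `z₂`, is zero-free on `𝔻²`,
and has no common factor with its reflection `p̃`. -/
structure IsRIF2 (m n : ℕ) (p pt : MvPolynomial (Fin 2) ℂ) : Prop where
  hm : 1 ≤ m
  hn : 1 ≤ n
  deg1 : MvPolynomial.degreeOf 0 p = m
  deg2 : MvPolynomial.degreeOf 1 p = n
  stable : ∀ z ∈ bidisk, ev p z ≠ 0
  coprime : ∀ r : MvPolynomial (Fin 2) ℂ, r ∣ p → r ∣ pt → IsUnit r
  reflection : IsReflection2 m n p pt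

/-- The unimodular level set `C_α(φ)`, the closure of the set of points of `𝕋²` where
the radial limit of `φ` equals `α`. -/
def levelSet2 (p pt : MvPolynomial (Fin 2) ℂ) (α : ℂ) : Set (ℂ × ℂ) :=
  closure {ζ | ζ ∈ torus2 ∧
    Tendsto (fun r : ℝ => rif p pt ((r : ℂ) * ζ.1, (r : ℂ) * ζ.2))
      (𝓝[<] (1 : ℝ)) (𝓝 α)}

/-- `α` is an exceptional value for `φ = p̃/p`: some horizontal or vertical line of `𝕋²`
is contained in `C_α(φ)`. -/
def IsExceptional (p pt : MvPolynomial (Fin 2) ℂ) (α : ℂ) : Prop :=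
  ∃ τ : ℂ, ‖τ‖ = 1 ∧
    ({ζ : ℂ × ℂ | ζ.1 = τ ∧ ‖ζ.2‖ = 1} ⊆ levelSet2 p pt α ∨
     {ζ : ℂ × ℂ | ‖ζ.1‖ = 1 ∧ ζ.2 = τ} ⊆ levelSet2 p pt α)

/-- `α` is a generic value for `φ = p̃/p`. -/
def IsGenericValue (p pt : MvPolynomial (Fin 2) ℂ) (α : ℂ) : Prop :=
  ¬ IsExceptional p pt α

/-- Normalized Lebesgue (arclength) measure on the unit circle, as a measure on `ℂ`. -/
def mCircle : Measure ℂ :=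
  (ENNReal.ofReal (2 * Real.pi))⁻¹ •
    Measure.map (fun θ : ℝ => Complex.exp ((θ : ℂ) * Complex.I))
      (MeasureTheory.volume.restrict (Set.Ico 0 (2 * Real.pi)))

/-- The two-variable product Poisson kernel. -/
def poisson2 (z ζ : ℂ × ℂ) : ℝ :=
  ((1 - ‖z.1‖ ^ 2) / ‖ζ.1 - z.1‖ ^ 2) * ((1 - ‖z.2‖ ^ 2) / ‖ζ.2 - z.2‖ ^ 2)

/-- `σ` is the Clark measure of `φ = p̃/p` at parameter `α`: a positive Borel measure
on `𝕋²` whose Poisson integral is `(1-|φ(z)|²)/|α-φ(z)|²`. -/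
def IsClarkMeasure2 (p pt : MvPolynomial (Fin 2) ℂ) (α : ℂ) (σ : Measure (ℂ × ℂ)) : Prop :=
  σ torus2ᶜ = 0 ∧
  ∀ z ∈ bidisk,
    ∫⁻ ζ, ENNReal.ofReal (poisson2 z ζ) ∂σ =
      ENNReal.ofReal ((1 - ‖rif p pt z‖ ^ 2) / ‖α - rif p pt z‖ ^ 2)

/-- `g₁, …, g_n : 𝕋 → 𝕋` are functions on the circle, analytic except possibly at one
base point `τ₀ ∈ 𝕋`. -/
def IsGraphFamily (n : ℕ) (g : Fin n → ℂ → ℂ) : Prop :=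
  (∀ j, ∀ ζ : ℂ, ‖ζ‖ = 1 → ‖g j ζ‖ = 1) ∧
  ∃ τ₀ : ℂ, ‖τ₀‖ = 1 ∧ ∀ j, ∀ θ : ℝ,
    Complex.exp ((θ : ℂ) * Complex.I) ≠ τ₀ →
      AnalyticAt ℝ (fun t : ℝ => g j (Complex.exp ((t : ℂ) * Complex.I))) θ

/-- The union of the graphs `{(ζ, g_j(ζ)) : ζ ∈ 𝕋}`. -/
def graphUnion (n : ℕ) (g : Fin n → ℂ → ℂ) : Set (ℂ × ℂ) :=
  ⋃ j, {w : ℂ × ℂ | ‖w.1‖ = 1 ∧ w.2 = g j w.1}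

/-- The vertical line `{ζ ∈ 𝕋² : ζ₁ = τ}`. -/
def vLine (τ : ℂ) : Set (ℂ × ℂ) := {w : ℂ × ℂ | w.1 = τ ∧ ‖w.2‖ = 1}

/-!
On the line `z₁ = τ` the level-set hypothesis forces `p̃ = α p`: this holds on the circle
`|z₂| = 1`, hence identically in `z₂`. So `f = φ(·, z₂)` has `f(τ) = α` and `f'(τ) = d`, and
`|f| ≤ 1` on the disc because `|p̃| ≤ |p|` on `𝔻 × closed 𝔻` (the one-variable reflection
inequality `|y|^m |q(1/ȳ)| ≤ |q(y)|` for polynomials without zeros in the disc, followed by the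
maximum principle in `z₂`).

For such an `f`, moving from `τ` into the disc in a direction `τu` with `Re u < 0` cannot make
`|f|` exceed one, so `Re (ᾱ d τ u) ≤ 0` for all such `u`; hence `ᾱ d τ` is a nonnegative real,
namely `|d|`. Finally `1 - |w|² = |α - w|² (2 Re (α / (α - w)) - 1)` turns the quantity into
`2 Re (α / q(r)) - (1 - r)` with `q(r) = (α - f(rτ)) / (1 - r) → dτ`, whose limit is
`2 Re (α / (dτ)) = 2 / |d|`.
-/

theorem Complex.re_conj_mul_sub_le {α : ℂ} (hα : ‖α‖ = 1) (w : ℂ) :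
    ((starRingEnd ℂ) α * (w - α)).re ≤ ‖w‖ - 1 := by
  have h := re_le_norm ((starRingEnd ℂ) α * w)
  rw [norm_mul, RCLike.norm_conj, hα, one_mul] at h
  rw [mul_sub, conj_mul', hα]
  simpa using h

theorem eventually_norm_one_add_mul_lt_one {u : ℂ} (hu : u.re < 0) :
    ∀ᶠ t : ℝ in 𝓝[>] 0, ‖1 + t * u‖ < 1 := by
  have hu2 : 0 < normSq u := normSq_pos.mpr (by rintro rfl; simp at hu)
  filter_upwards [Ioo_mem_nhdsGT (div_pos (neg_pos.mpr hu) hu2)] with t ⟨ht0, ht⟩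
  rw [lt_div_iff₀ hu2] at ht
  rw [← sq_lt_one_iff₀ (norm_nonneg _), ← normSq_eq_norm_sq]
  have : normSq (1 + t * u) = 1 + t * (2 * u.re + t * normSq u) := by
    simp only [normSq_apply, add_re, one_re, mul_re, ofReal_re, ofReal_im, add_im, one_im,
      mul_im]
    ring
  rw [this]
  nlinarith

theorem re_mul_nonpos_of_norm_le_one_on_ball {f : ℂ → ℂ} {d τ : ℂ} (hf : HasDerivAt f d τ)
    (hτ : ‖τ‖ = 1) (hfτ : ‖f τ‖ = 1) (hmaps : ∀ z, ‖z‖ < 1 → ‖f z‖ ≤ 1) {u : ℂ}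
    (hu : u.re < 0) : ((starRingEnd ℂ) (f τ) * d * τ * u).re ≤ 0 := by
  have hseg : HasDerivAt (fun t : ℝ => f (τ + t * (τ * u))) (d * (τ * u)) 0 := by
    have hℓ := ((hasDerivAt_id ((0 : ℝ) : ℂ)).mul_const (τ * u)).const_add τ
    simp only [id, one_mul] at hℓ
    exact (hf.comp_of_eq _ hℓ (by simp)).comp_ofReal
  have hre := (continuous_re.comp (continuous_const_mul ((starRingEnd ℂ) (f τ)))).continuousAt
    |>.tendsto.comp hseg.tendsto_slope_zero_right
  rw [show (starRingEnd ℂ) (f τ) * d * τ * u = (starRingEnd ℂ) (f τ) * (d * (τ * u)) by ring]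
  refine le_of_tendsto hre ?_
  filter_upwards [eventually_norm_one_add_mul_lt_one hu, self_mem_nhdsWithin]
    with t ht (ht0 : 0 < t)
  have hz : ‖τ + t * (τ * u)‖ < 1 := by
    rwa [show τ + t * (τ * u) = τ * (1 + t * u) by ring, norm_mul, hτ, one_mul]
  have hval : ((starRingEnd ℂ) (f τ) * (t⁻¹ • (f (τ + t * (τ * u)) - f τ))).re
      = t⁻¹ * ((starRingEnd ℂ) (f τ) * (f (τ + t * (τ * u)) - f τ)).re := by
    rw [real_smul, mul_left_comm, re_ofReal_mul]
  have hnum : ((starRingEnd ℂ) (f τ) * (f (τ + t * (τ * u)) - f τ)).re ≤ 0 := by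
    linarith [Complex.re_conj_mul_sub_le hfτ (f (τ + t * (τ * u))), hmaps _ hz]
  simp only [Function.comp_apply, zero_add, ofReal_zero, zero_mul, add_zero]
  rw [hval]
  exact mul_nonpos_of_nonneg_of_nonpos (inv_nonneg.mpr ht0.le) hnum

theorem conj_mul_deriv_mul_eq_norm_of_norm_le_one_on_ball {f : ℂ → ℂ} {d τ : ℂ}
    (hf : HasDerivAt f d τ) (hτ : ‖τ‖ = 1) (hfτ : ‖f τ‖ = 1)
    (hmaps : ∀ z, ‖z‖ < 1 → ‖f z‖ ≤ 1) :
    (starRingEnd ℂ) (f τ) * d * τ = ‖d‖ := by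
  set c := (starRingEnd ℂ) (f τ) * d * τ
  have hhalf : {u : ℂ | u.re ≤ 0} ⊆ {u | (c * u).re ≤ 0} := by
    rw [← closure_setOfPred_re_lt]
    exact closure_minimal (fun u hu => re_mul_nonpos_of_norm_le_one_on_ball hf hτ hfτ hmaps hu)
      (isClosed_le (continuous_re.comp (continuous_const_mul c)) continuous_const)
  have hre : 0 ≤ c.re := by simpa using hhalf (show (-1 : ℂ).re ≤ 0 by simp)
  have him : c.im = 0 := le_antisymm (by simpa using hhalf (show (-I).re ≤ 0 by simp))
    (by simpa using hhalf (show I.re ≤ 0 by simp))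
  have hnorm : ‖c‖ = ‖d‖ := by simp [c, hfτ, hτ]
  rw [← hnorm, ← abs_re_eq_norm.mpr him, abs_of_nonneg hre]
  exact Complex.ext rfl (by simpa using him)

theorem Complex.one_sub_sq_norm_div_sq_norm_sub {α w : ℂ} (hα : ‖α‖ = 1) (hw : w ≠ α) :
    (1 - ‖w‖ ^ 2) / ‖α - w‖ ^ 2 = 2 * (α / (α - w)).re - 1 := by
  have hα2 : α.re ^ 2 + α.im ^ 2 = 1 := by
    rw [← one_pow 2, ← hα, ← normSq_eq_norm_sq, normSq_apply]; ring
  have hne : normSq (α - w) ≠ 0 := normSq_eq_zero.not.mpr (sub_ne_zero.mpr hw.symm)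
  rw [← normSq_eq_norm_sq, ← normSq_eq_norm_sq, div_re]
  field_simp
  simp only [normSq_apply, sub_re, sub_im]
  linear_combination (-1 : ℝ) * hα2

theorem tendsto_one_sub_mul_one_sub_sq_norm_div_of_norm_le_one_on_ball {f : ℂ → ℂ} {d τ : ℂ}
    (hf : HasDerivAt f d τ) (hd : d ≠ 0) (hτ : ‖τ‖ = 1) (hfτ : ‖f τ‖ = 1)
    (hmaps : ∀ z, ‖z‖ < 1 → ‖f z‖ ≤ 1) :
    Tendsto (fun r : ℝ => (1 - r) * ((1 - ‖f (r * τ)‖ ^ 2) / ‖f τ - f (r * τ)‖ ^ 2))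
      (𝓝[<] 1) (𝓝 (2 / ‖d‖)) := by
  set q : ℝ → ℂ := fun r => (f τ - f (r * τ)) / (1 - r)
  have hradial : HasDerivAt (fun r : ℝ => f (r * τ)) (d * τ) 1 := by
    have hℓ := (hasDerivAt_id ((1 : ℝ) : ℂ)).mul_const τ
    simp only [id, one_mul] at hℓ
    exact (hf.comp_of_eq _ hℓ (by simp)).comp_ofReal
  have hq : Tendsto q (𝓝[<] 1) (𝓝 (d * τ)) := by
    refine (hasDerivAt_iff_tendsto_slope.mp hradial |>.mono_left
      (nhdsLT_le_nhdsNE 1)).congr fun r => ?_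
    simp only [slope_def_module, q, real_smul, ofReal_inv, ofReal_sub, ofReal_one, one_mul]
    rw [div_eq_inv_mul, ← neg_sub (f τ), ← neg_sub (1 : ℂ), inv_neg, neg_mul_neg]
  have hdτ : d * τ ≠ 0 := mul_ne_zero hd (norm_ne_zero_iff.mp (by rw [hτ]; exact one_ne_zero))
  have hval : f τ / (d * τ) = ((‖d‖⁻¹ : ℝ) : ℂ) := by
    rw [ofReal_inv, ← conj_mul_deriv_mul_eq_norm_of_norm_le_one_on_ball hf hτ hfτ hmaps]
    refine eq_inv_of_mul_eq_one_right ?_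
    calc (starRingEnd ℂ) (f τ) * d * τ * (f τ / (d * τ))
        = (starRingEnd ℂ) (f τ) * f τ * ((d * τ) / (d * τ)) := by ring
      _ = 1 := by rw [conj_mul', hfτ, div_self hdτ]; simp
  have hlim : Tendsto (fun r : ℝ => 2 * (f τ / q r).re - (1 - r)) (𝓝[<] 1)
      (𝓝 (2 / ‖d‖)) := by
    have h := ((continuous_re.tendsto _).comp
      ((tendsto_const_nhds (x := f τ)).div hq hdτ)).const_mul 2 |>.sub ((continuous_const.sub continuous_id).tendsto' 1 0 (sub_self 1) |>.mono_left
        nhdsWithin_le_nhds)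
    rwa [hval, ofReal_re, sub_zero, ← div_eq_mul_inv] at h
  refine hlim.congr' ?_
  filter_upwards [hq.eventually_ne hdτ] with r hqr
  have hw : f (r * τ) ≠ f τ := fun h => hqr (by simp [q, h])
  rw [Complex.one_sub_sq_norm_div_sq_norm_sub hfτ hw, div_div_eq_mul_div,
    show (1 : ℂ) - r = ((1 - r : ℝ) : ℂ) by push_cast; ring, mul_comm (f τ), mul_div_assoc,
    re_ofReal_mul]
  ring

theorem Complex.norm_mul_norm_conj_inv_sub_le {a y : ℂ} (ha : 1 ≤ ‖a‖) (hy : ‖y‖ ≤ 1)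
    (hy0 : y ≠ 0) : ‖y‖ * ‖((starRingEnd ℂ) y)⁻¹ - a‖ ≤ ‖y - a‖ := by
  have hcy : (starRingEnd ℂ) y ≠ 0 := (_root_.map_ne_zero _).mpr hy0
  have hfac : ‖y‖ * ‖((starRingEnd ℂ) y)⁻¹ - a‖ = ‖1 - a * (starRingEnd ℂ) y‖ := by
    rw [← RCLike.norm_conj y, ← norm_mul, mul_sub, mul_inv_cancel₀ hcy, mul_comm]
  have hsq : normSq (y - a) - normSq (1 - a * (starRingEnd ℂ) y)
      = (normSq a - 1) * (1 - normSq y) := by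
    simp only [normSq_apply, sub_re, sub_im, mul_re, mul_im, conj_re, conj_im, one_re, one_im]
    ring
  rw [hfac, ← sq_le_sq₀ (norm_nonneg _) (norm_nonneg _), ← normSq_eq_norm_sq,
    ← normSq_eq_norm_sq]
  rw [normSq_eq_norm_sq a, normSq_eq_norm_sq y] at hsq
  have : 0 ≤ (‖a‖ ^ 2 - 1) * (1 - ‖y‖ ^ 2) :=
    mul_nonneg (by nlinarith) (by nlinarith [norm_nonneg y])
  linarith

namespace Polynomial

theorem norm_pow_mul_norm_eval_conj_inv_le {Q : ℂ[X]} (hQ : ∀ a, Q.IsRoot a → 1 ≤ ‖a‖) {M : ℕ}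
    (hM : Q.natDegree ≤ M) {y : ℂ} (hy : ‖y‖ ≤ 1) (hy0 : y ≠ 0) :
    ‖y‖ ^ M * ‖Q.eval ((starRingEnd ℂ) y)⁻¹‖ ≤ ‖Q.eval y‖ := by
  have hprod : ∀ s : Multiset ℂ, (∀ a ∈ s, 1 ≤ ‖a‖) →
      ‖y‖ ^ Multiset.card s * ‖((s.map fun a => X - C a).prod).eval ((starRingEnd ℂ) y)⁻¹‖
        ≤ ‖((s.map fun a => X - C a).prod).eval y‖ := by
    intro s
    induction s using Multiset.induction_on with
    | empty => simp
    | cons a s ih =>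
      intro hs
      simp only [Multiset.map_cons, Multiset.prod_cons, eval_mul, eval_sub, eval_X, eval_C,
        norm_mul, Multiset.card_cons, pow_succ]
      calc _ = (‖y‖ * ‖((starRingEnd ℂ) y)⁻¹ - a‖) * (‖y‖ ^ Multiset.card s
              * ‖((s.map fun a => X - C a).prod).eval ((starRingEnd ℂ) y)⁻¹‖) := by ring
        _ ≤ _ := mul_le_mul (Complex.norm_mul_norm_conj_inv_sub_le (hs a (by simp)) hy hy0)
            (ih fun b hb => hs b (by simp [hb])) (by positivity) (norm_nonneg _)
  rcases eq_or_ne Q 0 with rfl | hQ0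
  · simp
  rw [← C_leadingCoeff_mul_prod_multiset_X_sub_C (p := Q) IsAlgClosed.card_roots_eq_natDegree]
  simp only [eval_mul, eval_C, norm_mul, mul_left_comm _ ‖Q.leadingCoeff‖]
  refine mul_le_mul_of_nonneg_left (le_trans ?_ (hprod _ fun a ha => hQ a ?_)) (norm_nonneg _)
  · rw [IsAlgClosed.card_roots_eq_natDegree]
    exact mul_le_mul_of_nonneg_right (pow_le_pow_of_le_one (norm_nonneg y) hy hM) (norm_nonneg _)
  · exact (mem_roots hQ0).mp ha

theorem eventually_eval_mul_exp_ne_zero {g : ℂ[X]} (hg : g ≠ 0) {v : ℂ} (hv : v ≠ 0) :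
    ∀ᶠ θ : ℝ in 𝓝[≠] 0, g.eval (v * exp (θ * I)) ≠ 0 := by
  have hγ : HasDerivAt (fun θ : ℝ => v * exp (θ * I)) (v * I) 0 := by
    have h := (((hasDerivAt_id ((0 : ℝ) : ℂ)).mul_const I).cexp).const_mul v
    simp only [id, ofReal_zero, zero_mul, exp_zero, one_mul] at h
    exact h.comp_ofReal
  exact hγ.eventually_notMem (mul_ne_zero hv I_ne_zero) {z | g.IsRoot z}
    fun h => Set.Infinite.of_accPt h (finite_setOfPred_isRoot hg)

theorem norm_eval_le_of_norm_mul_eval_le {g A B : ℂ[X]} (hg : g ≠ 0)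
    (h : ∀ v : ℂ, ‖v‖ = 1 → ‖(g * A).eval v‖ ≤ ‖(g * B).eval v‖) {v : ℂ} (hv : ‖v‖ = 1) :
    ‖A.eval v‖ ≤ ‖B.eval v‖ := by
  have hγ : ∀ F : ℂ[X], Tendsto (fun θ : ℝ => ‖F.eval (v * exp (θ * I))‖) (𝓝[≠] 0)
      (𝓝 ‖F.eval v‖) := fun F => by
    have hc : Continuous fun θ : ℝ => ‖F.eval (v * exp (θ * I))‖ := by fun_prop
    simpa using hc.continuousAt.tendsto.mono_left (nhdsWithin_le_nhds (a := (0 : ℝ)))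
  refine le_of_tendsto_of_tendsto (hγ A) (hγ B) ?_
  filter_upwards [eventually_eval_mul_exp_ne_zero hg (norm_ne_zero_iff.mp (hv ▸ one_ne_zero))]
    with θ hθ
  have h := h (v * exp (θ * I)) (by rw [norm_mul, hv, norm_exp_ofReal_mul_I, one_mul])
  rw [eval_mul, eval_mul, norm_mul, norm_mul] at h
  exact le_of_mul_le_mul_left h (norm_pos_iff.mpr hθ)

theorem norm_eval_le_of_sphere_of_closedBall_ne_zero {A B : ℂ[X]}
    (hB : ∀ v : ℂ, ‖v‖ ≤ 1 → B.eval v ≠ 0) (h : ∀ v : ℂ, ‖v‖ = 1 → ‖A.eval v‖ ≤ ‖B.eval v‖)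
    {w : ℂ} (hw : ‖w‖ ≤ 1) : ‖A.eval w‖ ≤ ‖B.eval w‖ := by
  have hdiff : DiffContOnCl ℂ (fun x => A.eval x / B.eval x) (Metric.ball (0 : ℂ) 1) := by
    refine ⟨A.differentiable.differentiableOn.div B.differentiable.differentiableOn
      fun x hx => hB x (mem_ball_zero_iff.mp hx).le, ?_⟩
    rw [closure_ball (0 : ℂ) one_ne_zero]
    exact A.continuous.continuousOn.div B.continuous.continuousOn
      fun x hx => hB x (mem_closedBall_zero_iff.mp hx)
  have hmax : ‖A.eval w / B.eval w‖ ≤ 1 := by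
    refine Complex.norm_le_of_forall_mem_frontier_norm_le Metric.isBounded_ball hdiff ?_
      (by rwa [closure_ball (0 : ℂ) one_ne_zero, mem_closedBall_zero_iff])
    intro x hx
    rw [frontier_ball (0 : ℂ) one_ne_zero, mem_sphere_zero_iff_norm] at hx
    rw [norm_div, div_le_one (norm_pos_iff.mpr (hB x hx.le))]
    exact h x hx
  rwa [norm_div, div_le_one (norm_pos_iff.mpr (hB w hw))] at hmax

theorem norm_eval_le_of_sphere_of_ball_ne_zero {P R : ℂ[X]}
    (hP : ∀ v : ℂ, ‖v‖ < 1 → P.eval v ≠ 0) (h : ∀ v : ℂ, ‖v‖ = 1 → ‖R.eval v‖ ≤ ‖P.eval v‖)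
    {w : ℂ} (hw : ‖w‖ ≤ 1) : ‖R.eval w‖ ≤ ‖P.eval w‖ := by
  rcases eq_or_ne R 0 with rfl | hR
  · simp
  have hP0 : P ≠ 0 := fun h => hP 0 (by simp) (by simp [h])
  -- Cancelling `gcd P R` removes the common zeros on the circle: afterwards `B` has none there,
  -- since `|A| ≤ |B|` on the circle and `A`, `B` are coprime.
  obtain ⟨g, B, A, hg, rfl, rfl, hcop⟩ : ∃ g B A : ℂ[X], g ≠ 0 ∧ P = g * B ∧ R = g * A ∧
      IsCoprime B A :=
    ⟨gcd P R, P / gcd P R, R / gcd P R, gcd_ne_zero_of_left hP0,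
      (EuclideanDomain.mul_div_cancel' (gcd_ne_zero_of_left hP0) (gcd_dvd_left P R)).symm,
      (EuclideanDomain.mul_div_cancel' (gcd_ne_zero_of_left hP0) (gcd_dvd_right P R)).symm,
      isCoprime_div_gcd_div_gcd hR⟩
  have hAB : ∀ v : ℂ, ‖v‖ = 1 → ‖A.eval v‖ ≤ ‖B.eval v‖ :=
    fun v hv => norm_eval_le_of_norm_mul_eval_le hg h hv
  have hB : ∀ v : ℂ, ‖v‖ ≤ 1 → B.eval v ≠ 0 := by
    intro v hv hBv
    rcases hv.lt_or_eq with hv | hv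
    · exact hP v hv (by rw [eval_mul, hBv, mul_zero])
    · have hAv := hAB v hv
      rw [hBv, norm_zero, norm_le_zero_iff] at hAv
      obtain ⟨x, y, hxy⟩ := hcop
      simpa [hAv, hBv] using congrArg (eval v) hxy
  rw [eval_mul, eval_mul, norm_mul, norm_mul]
  exact mul_le_mul_of_nonneg_left (norm_eval_le_of_sphere_of_closedBall_ne_zero hB hAB hw)
    (norm_nonneg _)

theorem eq_zero_of_forall_norm_eq_one_eval_eq_zero {Q : ℂ[X]}
    (h : ∀ v : ℂ, ‖v‖ = 1 → Q.eval v = 0) : Q = 0 := by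
  by_contra hQ
  obtain ⟨θ, hθ⟩ := (eventually_eval_mul_exp_ne_zero hQ one_ne_zero).exists
  exact hθ (h _ (by rw [one_mul, norm_exp_ofReal_mul_I]))

end Polynomial

section TwoVariables

open MvPolynomial

@[fun_prop]
theorem continuous_ev (q : MvPolynomial (Fin 2) ℂ) : Continuous (ev q) :=
  (continuous_eval q).comp (continuous_pi fun i => by fin_cases i <;> simp <;> fun_prop)

theorem hasDerivAt_ev_fst (q : MvPolynomial (Fin 2) ℂ) (w z : ℂ) :
    HasDerivAt (fun x => ev q (x, w)) (ev (pderiv 0 q) (z, w)) z := by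
  induction q using MvPolynomial.induction_on with
  | C a => simpa [ev] using hasDerivAt_const z a
  | add q r hq hr =>
    simp only [ev, map_add] at hq hr ⊢
    exact hq.add hr
  | mul_X q i hq =>
    simp only [ev] at hq ⊢
    obtain rfl | rfl : i = 0 ∨ i = 1 := by fin_cases i <;> simp
    · refine ((hq.mul (hasDerivAt_id' z)).congr_deriv ?_).congr_of_eventuallyEq ?_
      · simp; ring
      · exact Eventually.of_forall fun x => by simp
    · refine ((hq.mul_const w).congr_deriv ?_).congr_of_eventuallyEq ?_
      · simp [pderiv_X, mul_comm]
      · exact Eventually.of_forall fun x => by simp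

def sliceFst (q : MvPolynomial (Fin 2) ℂ) (w : ℂ) : Polynomial ℂ :=
  Polynomial.map (eval fun _ : Fin 1 => w) (finSuccEquiv ℂ 1 q)

theorem eval_sliceFst (q : MvPolynomial (Fin 2) ℂ) (w z : ℂ) :
    (sliceFst q w).eval z = ev q (z, w) := by
  have hv : (Fin.cons z fun _ => w : Fin 2 → ℂ) = ![z, w] := by
    ext i; fin_cases i <;> rfl
  rw [sliceFst, ← eval_eq_eval_mv_eval', ev, hv]

theorem natDegree_sliceFst_le (q : MvPolynomial (Fin 2) ℂ) (w : ℂ) :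
    (sliceFst q w).natDegree ≤ degreeOf 0 q :=
  Polynomial.natDegree_map_le.trans (natDegree_finSuccEquiv q).le

def sliceSnd (q : MvPolynomial (Fin 2) ℂ) (z : ℂ) : Polynomial ℂ :=
  sliceFst (rename (Equiv.swap 0 1) q) z

theorem eval_sliceSnd (q : MvPolynomial (Fin 2) ℂ) (z y : ℂ) :
    (sliceSnd q z).eval y = ev q (z, y) := by
  have hv : (![y, z] ∘ Equiv.swap (0 : Fin 2) 1) = ![z, y] := by
    ext i; fin_cases i <;> simp [Equiv.swap_apply_right]
  rw [sliceSnd, eval_sliceFst, ev, ev, eval_rename, hv]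

end TwoVariables

section RationalInnerFunction

variable {m n : ℕ} {p pt : MvPolynomial (Fin 2) ℂ}

theorem norm_pow_mul_norm_ev_conj_inv_le (hstable : ∀ z ∈ bidisk, ev p z ≠ 0)
    (hdeg : MvPolynomial.degreeOf 0 p ≤ m) {y w : ℂ} (hy : ‖y‖ ≤ 1) (hy0 : y ≠ 0)
    (hw : ‖w‖ ≤ 1) : ‖y‖ ^ m * ‖ev p (((starRingEnd ℂ) y)⁻¹, w)‖ ≤ ‖ev p (y, w)‖ := by
  have hinner : ∀ w : ℂ, ‖w‖ < 1 →
      ‖y‖ ^ m * ‖ev p (((starRingEnd ℂ) y)⁻¹, w)‖ ≤ ‖ev p (y, w)‖ := fun w hw => by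
    simpa only [eval_sliceFst] using (sliceFst p w).norm_pow_mul_norm_eval_conj_inv_le
      (fun a ha => not_lt.mp fun ha1 => hstable (a, w) ⟨ha1, hw⟩ (by rwa [← eval_sliceFst]))
      ((natDegree_sliceFst_le p w).trans hdeg) hy hy0
  have hcont : ∀ x : ℂ, Tendsto (fun t : ℝ => ‖ev p (x, t * w)‖) (𝓝[<] 1)
      (𝓝 ‖ev p (x, w)‖) := fun x => by
    have hc : Continuous fun t : ℝ => ‖ev p (x, t * w)‖ := by fun_prop
    simpa using hc.continuousAt.tendsto.mono_left (nhdsWithin_le_nhds (a := (1 : ℝ)))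
  refine le_of_tendsto_of_tendsto ((hcont _).const_mul _) (hcont y) ?_
  filter_upwards [Ioo_mem_nhdsLT (show (0 : ℝ) < 1 by norm_num)] with t ht
  refine hinner _ ?_
  rw [norm_mul, norm_real, Real.norm_of_nonneg ht.1.le]
  exact mul_lt_one_of_nonneg_of_lt_one_left ht.1.le ht.2 hw

theorem norm_ev_reflection_le_of_norm_eq_one (hstable : ∀ z ∈ bidisk, ev p z ≠ 0)
    (hdeg : MvPolynomial.degreeOf 0 p ≤ m) (hrefl : IsReflection2 m n p pt) {z ζ : ℂ}
    (hz : ‖z‖ ≤ 1) (hz0 : z ≠ 0) (hζ : ‖ζ‖ = 1) : ‖ev pt (z, ζ)‖ ≤ ‖ev p (z, ζ)‖ := by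
  have hζ0 : ζ ≠ 0 := norm_ne_zero_iff.mp (hζ ▸ one_ne_zero)
  have hζinv : ((starRingEnd ℂ) ζ)⁻¹ = ζ := by rw [← map_inv₀, inv_eq_conj hζ, conj_conj]
  rw [hrefl (z, ζ) hz0 hζ0, hζinv, norm_mul, norm_mul, norm_pow, norm_pow, hζ, one_pow,
    mul_one, RCLike.norm_conj]
  exact norm_pow_mul_norm_ev_conj_inv_le hstable hdeg hz hz0 hζ.le

theorem norm_ev_reflection_le (hstable : ∀ z ∈ bidisk, ev p z ≠ 0)
    (hdeg : MvPolynomial.degreeOf 0 p ≤ m) (hrefl : IsReflection2 m n p pt) {z w : ℂ}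
    (hz : ‖z‖ < 1) (hw : ‖w‖ ≤ 1) : ‖ev pt (z, w)‖ ≤ ‖ev p (z, w)‖ := by
  have hne : ∀ x : ℂ, ‖x‖ < 1 → x ≠ 0 → ‖ev pt (x, w)‖ ≤ ‖ev p (x, w)‖ := fun x hx hx0 => by
    simpa only [eval_sliceSnd] using Polynomial.norm_eval_le_of_sphere_of_ball_ne_zero
      (P := sliceSnd p x) (R := sliceSnd pt x)
      (fun v hv => by rw [eval_sliceSnd]; exact hstable (x, v) ⟨hx, hv⟩)
      (fun v hv => by
        simpa only [eval_sliceSnd] using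
          norm_ev_reflection_le_of_norm_eq_one hstable hdeg hrefl hx.le hx0 hv) hw
  rcases ne_or_eq z 0 with hz0 | rfl
  · exact hne z hz hz0
  have hcont : ∀ q, Tendsto (fun x : ℂ => ‖ev q (x, w)‖) (𝓝[≠] 0) (𝓝 ‖ev q (0, w)‖) :=
    fun q => (by fun_prop : Continuous fun x : ℂ => ‖ev q (x, w)‖).continuousAt.tendsto.mono_left
      nhdsWithin_le_nhds
  refine le_of_tendsto_of_tendsto (hcont pt) (hcont p) ?_
  filter_upwards [nhdsWithin_le_nhds (Metric.ball_mem_nhds (0 : ℂ) one_pos),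
    self_mem_nhdsWithin] with x hx hx0
  exact hne x (mem_ball_zero_iff.mp hx) hx0

theorem norm_rif_le_one (hstable : ∀ z ∈ bidisk, ev p z ≠ 0)
    (hdeg : MvPolynomial.degreeOf 0 p ≤ m) (hrefl : IsReflection2 m n p pt) {z : ℂ × ℂ}
    (hz : z ∈ bidisk) : ‖rif p pt z‖ ≤ 1 := by
  rw [rif, norm_div, div_le_one (norm_pos_iff.mpr (hstable z hz))]
  exact norm_ev_reflection_le hstable hdeg hrefl hz.1 hz.2.le

theorem ev_eq_mul_ev_of_mem_levelSet2 {α : ℂ} (hstable : ∀ z ∈ bidisk, ev p z ≠ 0) {ζ : ℂ × ℂ}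
    (hζ : ζ ∈ levelSet2 p pt α) : ev pt ζ = α * ev p ζ := by
  refine closure_minimal (fun ζ hζ => ?_)
    (isClosed_eq (continuous_ev pt) ((continuous_ev p).const_mul α)) hζ
  obtain ⟨⟨h1, h2⟩, htend⟩ := hζ
  set γ : ℝ → ℂ × ℂ := fun r => (r * ζ.1, r * ζ.2)
  have hγ : Tendsto γ (𝓝[<] 1) (𝓝 ζ) := by
    have hc : Continuous γ := by fun_prop
    simpa [γ] using hc.continuousAt.tendsto.mono_left (nhdsWithin_le_nhds (a := (1 : ℝ)))
  have hlhs : Tendsto (fun r => ev pt (γ r) - α * ev p (γ r)) (𝓝[<] 1)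
      (𝓝 (ev pt ζ - α * ev p ζ)) :=
    (((continuous_ev pt).tendsto ζ).sub (((continuous_ev p).tendsto ζ).const_mul α)).comp hγ
  have hrhs : Tendsto (fun r => (rif p pt (γ r) - α) * ev p (γ r)) (𝓝[<] 1)
      (𝓝 ((α - α) * ev p ζ)) :=
    (htend.sub_const α).mul (((continuous_ev p).tendsto ζ).comp hγ)
  rw [sub_self, zero_mul] at hrhs
  refine sub_eq_zero.mp (tendsto_nhds_unique (hlhs.congr' ?_) hrhs)
  filter_upwards [Ioo_mem_nhdsLT zero_lt_one] with r hr
  have hr1 : ‖(r : ℂ)‖ < 1 := by rw [norm_real, Real.norm_of_nonneg hr.1.le]; exact hr.2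
  have hγr : γ r ∈ bidisk := by
    simp only [bidisk, γ, Set.mem_ofPred_eq, norm_mul, h1, h2, mul_one, hr1, and_self]
  rw [rif, sub_mul, div_mul_cancel₀ _ (hstable _ hγr)]

theorem ev_eq_mul_ev_of_vLine_subset {α τ : ℂ} (hstable : ∀ z ∈ bidisk, ev p z ≠ 0)
    (hline : vLine τ ⊆ levelSet2 p pt α) (y : ℂ) : ev pt (τ, y) = α * ev p (τ, y) := by
  have h := Polynomial.eq_zero_of_forall_norm_eq_one_eval_eq_zero
    (Q := sliceSnd pt τ - Polynomial.C α * sliceSnd p τ) fun v hv => by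
      rw [Polynomial.eval_sub, Polynomial.eval_mul, Polynomial.eval_C, eval_sliceSnd,
        eval_sliceSnd, sub_eq_zero]
      exact ev_eq_mul_ev_of_mem_levelSet2 hstable (hline ⟨rfl, hv⟩)
  simpa [eval_sliceSnd, sub_eq_zero] using congrArg (Polynomial.eval y) h

end RationalInnerFunction

/-- Let `φ = p̃/p` be a bidegree `(m,n)` RIF on `𝔻²`, let `α ∈ 𝕋`,
and suppose the vertical line `{ζ ∈ 𝕋² : ζ₁ = τ}` is contained in `C_α(φ)`, so that
`d = ∂φ/∂z₁(τ, z₂)` is a nonzero constant independent of `z₂ ∈ 𝔻`. Then for every fixed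
`z₂ ∈ 𝔻`, `(1−r)·(1−|φ(rτ, z₂)|²)/|α − φ(rτ, z₂)|² → 2/|d|` as `r → 1⁻`. -/
theorem line_mass_limit
    (m n : ℕ) (p pt : MvPolynomial (Fin 2) ℂ) (hRIF : IsRIF2 m n p pt)
    (α : ℂ) (hα : ‖α‖ = 1) (τ : ℂ) (hτ : ‖τ‖ = 1)
    (hline : vLine τ ⊆ levelSet2 p pt α)
    (dc : ℂ) (hdc0 : dc ≠ 0)
    (hdc : ∀ z₂ : ℂ, ‖z₂‖ < 1 → dphi1 p pt (τ, z₂) = dc) :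
    ∀ z₂ : ℂ, ‖z₂‖ < 1 →
      Tendsto
        (fun r : ℝ =>
          (1 - r) *
            ((1 - ‖rif p pt ((r : ℂ) * τ, z₂)‖ ^ 2) /
              ‖α - rif p pt ((r : ℂ) * τ, z₂)‖ ^ 2))
        (𝓝[<] (1 : ℝ)) (𝓝 (2 / ‖dc‖)) := by
  intro b hb
  -- `dphi1` divides by `p²`, so it is `0` wherever `p` vanishes; `dc ≠ 0` rules this out.
  have hpb : ev p (τ, b) ≠ 0 := fun h => hdc0 (by simpa [dphi1, h] using (hdc b hb).symm)
  have hfτ : rif p pt (τ, b) = α := by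
    rw [rif, ev_eq_mul_ev_of_vLine_subset hRIF.stable hline b, mul_div_cancel_right₀ _ hpb]
  have hf : HasDerivAt (fun z => rif p pt (z, b)) dc τ := by
    rw [← hdc b hb]
    exact (hasDerivAt_ev_fst pt b τ).div (hasDerivAt_ev_fst p b τ) hpb
  have hmaps : ∀ z : ℂ, ‖z‖ < 1 → ‖rif p pt (z, b)‖ ≤ 1 := fun z hz =>
    norm_rif_le_one hRIF.stable hRIF.deg1.le hRIF.reflection ⟨hz, hb⟩
  simpa only [hfτ] using tendsto_one_sub_mul_one_sub_sq_norm_div_of_norm_le_one_on_ball hf hdc0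
    hτ (hfτ ▸ hα) hmaps
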